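/- arXiv:1401.2523 — 5 statements merged into one kernel-verified Lean document; each statement's English description precedes it below -/
import Mathlib

section
/- Let D be a domain in ℝ^d satisfying condition (B') with constants δ > 0 and 0 ≤ α < 1. Then D satisfies condition (B) with the same constant δ and with β = (1 − α²)^{−1/2}; moreover for each x ∈ ∂D the same unit vector l_x can be used in both conditions. -/
open MeasureTheory ProbabilityTheory Set RealInnerProductSpace

noncomputable section

/-- `d`-dimensional Euclidean space. -/
abbrev Euc (d : ℕ) := EuclideanSpace ℝ (Fin d)

/-- The set `N_{x,r}` of inward unit normal vectors at `x` with radius `r`: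
`{n : ‖n‖ = 1, B(x - r n, r) ∩ D = ∅}`. -/
def normalSet {d : ℕ} (D : Set (Euc d)) (x : Euc d) (r : ℝ) : Set (Euc d) :=
  {n | ‖n‖ = 1 ∧ Metric.ball (x - r • n) r ∩ D = ∅}

/-- The set `N_x = ⋃_{r>0} N_{x,r}` of inward unit normal vectors at `x`. -/
def normalCone {d : ℕ} (D : Set (Euc d)) (x : Euc d) : Set (Euc d) :=
  ⋃ r > 0, normalSet D x r

/-- The cone `C(y, l, α) = {z : ⟨z − y, l⟩ ≥ α |z − y|}`. -/
def cone {d : ℕ} (y l : Euc d) (α : ℝ) : Set (Euc d) :=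
  {z | α * ‖z - y‖ ≤ ⟪z - y, l⟫}

/-- Condition (B) with constants `δ`, `β`. -/
def CondB {d : ℕ} (D : Set (Euc d)) (δ β : ℝ) : Prop :=
  ∀ x ∈ frontier D, ∃ l : Euc d, ‖l‖ = 1 ∧
    ∀ y ∈ Metric.ball x δ ∩ frontier D, ∀ n ∈ normalCone D y, 1 / β ≤ ⟪l, n⟫

/-- Condition (B') with constants `δ`, `α`. -/
def CondB' {d : ℕ} (D : Set (Euc d)) (δ α : ℝ) : Prop :=
  ∀ x ∈ frontier D, ∃ l : Euc d, ‖l‖ = 1 ∧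
    ∀ y ∈ Metric.ball x δ ∩ frontier D, cone y l α ∩ Metric.ball x δ ⊆ closure D

/-! If `⟪l, n⟫ < √(1 - α²)` for an inward normal `n ∈ N_{y,r}`, some direction `v` lies in the
cone of half-angle `arccos α` around `l` but makes an obtuse angle with `n`. The points `y + t v`
with small `t > 0` then lie in the cone near `y`, hence in `closure D`, and also in the open ball
`B(y - r n, r)`, which misses `D` and therefore misses `closure D`. -/

open Filter Topology

section InnerProductSpace

variable {E : Type*} [NormedAddCommGroup E] [InnerProductSpace ℝ E]

/-- Writing `n = s l + w` with `w ⊥ l`, the witness `α ‖w‖ l - √(1 - α²) w` makes the angle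
`arccos α` with `l`, and its angle with `n` is obtuse exactly when `s < √(1 - α²)`. -/
theorem exists_inner_neg_of_inner_lt_sqrt {l n : E} (hl : ‖l‖ = 1) (hn : ‖n‖ = 1)
    {α : ℝ} (hα0 : 0 ≤ α) (hα1 : α ≤ 1) (h : ⟪l, n⟫ < √(1 - α ^ 2)) :
    ∃ v : E, α * ‖v‖ ≤ ⟪v, l⟫ ∧ ⟪v, n⟫ < 0 := by
  set s := ⟪l, n⟫ with hs
  have hll : ⟪l, l⟫ = 1 := by rw [real_inner_self_eq_norm_sq, hl, one_pow]
  rcases lt_or_ge s 0 with hs_neg | hs_nonneg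
  · exact ⟨l, by rw [hl, hll, mul_one]; exact hα1, hs_neg⟩
  set A := √(1 - α ^ 2)
  have hA_sq : A ^ 2 = 1 - α ^ 2 := Real.sq_sqrt (by nlinarith)
  have hA_nonneg : 0 ≤ A := Real.sqrt_nonneg _
  set w := n - s • l
  have hwl : ⟪w, l⟫ = 0 := by
    simp only [w, inner_sub_left, real_inner_smul_left, hll, real_inner_comm l n, ← hs]; ring
  have hwn : ⟪w, n⟫ = ‖w‖ ^ 2 := by
    rw [← real_inner_self_eq_norm_sq, inner_sub_right w n (s • l), real_inner_smul_right, hwl,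
      mul_zero, sub_zero]
  have hw_sq : ‖w‖ ^ 2 = 1 - s ^ 2 := by
    rw [← hwn]
    simp only [w, inner_sub_left, real_inner_smul_left, real_inner_self_eq_norm_sq, hn, ← hs]
    ring
  have hsA : s ^ 2 < A ^ 2 := by nlinarith
  have hw_pos : 0 < ‖w‖ := by nlinarith [norm_nonneg w]
  have hobtuse : α * s < A * ‖w‖ := by
    refine lt_of_pow_lt_pow_left₀ 2 (by positivity) ?_
    rw [mul_pow, mul_pow, hA_sq, hw_sq]
    nlinarith
  refine ⟨(α * ‖w‖) • l - A • w, le_of_eq ?_, ?_⟩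
  · have hv : ‖(α * ‖w‖) • l - A • w‖ = ‖w‖ := by
      refine (sq_eq_sq₀ (norm_nonneg _) (norm_nonneg _)).mp ?_
      rw [norm_sub_sq_real, norm_smul, norm_smul, real_inner_smul_left, real_inner_smul_right,
        real_inner_comm, hwl, hl, Real.norm_eq_abs, Real.norm_eq_abs, abs_of_nonneg hA_nonneg,
        abs_of_nonneg (by positivity)]
      linear_combination ‖w‖ ^ 2 * hA_sq
    rw [hv, inner_sub_left, real_inner_smul_left, real_inner_smul_left, hll, hwl]
    ring
  · rw [inner_sub_left, real_inner_smul_left, real_inner_smul_left, ← hs, hwn]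
    nlinarith

theorem eventually_add_smul_mem_ball {c y v : E} (h : ⟪v, y - c⟫ < 0) :
    ∀ᶠ t in 𝓝[>] (0 : ℝ), y + t • v ∈ Metric.ball c ‖y - c‖ := by
  have hlim : Tendsto (fun t : ℝ => t * ‖v‖ ^ 2 + 2 * ⟪v, y - c⟫) (𝓝 0)
      (𝓝 (2 * ⟪v, y - c⟫)) :=
    (by fun_prop : Continuous fun t : ℝ => t * ‖v‖ ^ 2 + 2 * ⟪v, y - c⟫).tendsto' 0 _ (by simp)
  have hneg : ∀ᶠ t in 𝓝 (0 : ℝ), t * ‖v‖ ^ 2 + 2 * ⟪v, y - c⟫ < 0 :=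
    hlim.eventually_lt_const (by linarith)
  filter_upwards [self_mem_nhdsWithin, nhdsWithin_le_nhds hneg] with t (ht : 0 < t) hlt
  rw [Metric.mem_ball, dist_eq_norm, show y + t • v - c = (y - c) + t • v by abel]
  refine lt_of_pow_lt_pow_left₀ 2 (norm_nonneg _) ?_
  rw [norm_add_sq_real, real_inner_smul_right, norm_smul, Real.norm_eq_abs, abs_of_pos ht,
    real_inner_comm]
  nlinarith [mul_neg_of_pos_of_neg ht hlt]

end InnerProductSpace

theorem add_smul_mem_cone {d : ℕ} {y l v : Euc d} {α t : ℝ} (ht : 0 ≤ t)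
    (hv : α * ‖v‖ ≤ ⟪v, l⟫) : y + t • v ∈ cone y l α := by
  rw [cone, mem_ofPred_eq, add_sub_cancel_left, norm_smul, Real.norm_eq_abs, abs_of_nonneg ht,
    real_inner_smul_left]
  nlinarith

theorem sqrt_one_sub_sq_le_inner_of_mem_normalCone {d : ℕ} {D U : Set (Euc d)}
    {y l n : Euc d} {α : ℝ} (hα0 : 0 ≤ α) (hα1 : α ≤ 1) (hl : ‖l‖ = 1) (hU : IsOpen U)
    (hyU : y ∈ U) (hcone : cone y l α ∩ U ⊆ closure D) (hn : n ∈ normalCone D y) :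
    √(1 - α ^ 2) ≤ ⟪l, n⟫ := by
  simp only [normalCone, normalSet, mem_iUnion, mem_ofPred_eq] at hn
  obtain ⟨r, hr, hn1, hball⟩ := hn
  by_contra! hlt
  obtain ⟨v, hvl, hvn⟩ := exists_inner_neg_of_inner_lt_sqrt hl hn1 hα0 hα1 hlt
  have hcenter : y - (y - r • n) = r • n := sub_sub_cancel y _
  have hradius : ‖y - (y - r • n)‖ = r := by
    rw [hcenter, norm_smul, hn1, Real.norm_of_nonneg hr.le, mul_one]
  have hinward : ⟪v, y - (y - r • n)⟫ < 0 := by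
    rw [hcenter, real_inner_smul_right]
    exact mul_neg_of_pos_of_neg hr hvn
  have hU_near : ∀ᶠ t in 𝓝 (0 : ℝ), y + t • v ∈ U :=
    (continuous_const.add (continuous_id.smul continuous_const)).continuousAt.preimage_mem_nhds
      (by simpa using hU.mem_nhds hyU)
  obtain ⟨t, ht, hinball, htU⟩ := (eventually_mem_nhdsWithin.and
    ((eventually_add_smul_mem_ball hinward).and (nhdsWithin_le_nhds hU_near))).exists
  rw [hradius] at hinball
  have hdisj : Disjoint (Metric.ball (y - r • n) r) (closure D) :=
    (Set.disjoint_iff_inter_eq_empty.mpr hball).closure_right Metric.isOpen_ball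
  exact hdisj.notMem_of_mem_left hinball (hcone ⟨add_smul_mem_cone ht.le hvl, htU⟩)

theorem stmt1_general {d : ℕ} (D : Set (Euc d))
    (δ α : ℝ) (hα0 : 0 ≤ α) (hα1 : α < 1)
    (hB' : CondB' D δ α) :
    CondB D δ ((1 - α ^ 2) ^ (-(1 / 2) : ℝ)) ∧
      ∀ x ∈ frontier D, ∀ l : Euc d, ‖l‖ = 1 →
        (∀ y ∈ Metric.ball x δ ∩ frontier D, cone y l α ∩ Metric.ball x δ ⊆ closure D) →
        ∀ y ∈ Metric.ball x δ ∩ frontier D, ∀ n ∈ normalCone D y,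
          1 / ((1 - α ^ 2) ^ (-(1 / 2) : ℝ)) ≤ ⟪l, n⟫ := by
  have hβ : 1 / ((1 - α ^ 2) ^ (-(1 / 2) : ℝ)) = √(1 - α ^ 2) := by
    rw [Real.rpow_neg (by nlinarith), one_div, inv_inv, Real.sqrt_eq_rpow]
  unfold CondB
  rw [hβ]
  refine ⟨fun x hx => ?_, fun x _ l hl hcone y hy n hn => ?_⟩
  · obtain ⟨l, hl, hcone⟩ := hB' x hx
    exact ⟨l, hl, fun y hy n hn => sqrt_one_sub_sq_le_inner_of_mem_normalCone hα0 hα1.le hl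
      Metric.isOpen_ball hy.1 (hcone y hy) hn⟩
  · exact sqrt_one_sub_sq_le_inner_of_mem_normalCone hα0 hα1.le hl Metric.isOpen_ball hy.1
      (hcone y hy) hn

/-- condition (B') with constants `δ > 0`, `0 ≤ α < 1` implies condition (B)
with the same `δ` and `β = (1 − α²)^{−1/2}`; moreover, for each boundary point `x`, any unit
vector `l` witnessing (B') at `x` also witnesses (B) at `x`. -/
theorem stmt1 {d : ℕ} (D : Set (Euc d)) (hDopen : IsOpen D) (hDconn : IsConnected D)
    (δ α : ℝ) (hδ : 0 < δ) (hα0 : 0 ≤ α) (hα1 : α < 1)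
    (hB' : CondB' D δ α) :
    CondB D δ ((1 - α ^ 2) ^ (-(1 / 2) : ℝ)) ∧
      ∀ x ∈ frontier D, ∀ l : Euc d, ‖l‖ = 1 →
        (∀ y ∈ Metric.ball x δ ∩ frontier D, cone y l α ∩ Metric.ball x δ ⊆ closure D) →
        ∀ y ∈ Metric.ball x δ ∩ frontier D, ∀ n ∈ normalCone D y,
          1 / ((1 - α ^ 2) ^ (-(1 / 2) : ℝ)) ≤ ⟪l, n⟫ :=
  stmt1_general D δ α hα0 hα1 hB'

end
end

section
/- Let D be a convex domain in ℝ^d, let x₀ ∈ D and R₀ > 0 be such that cl(B(x₀, R₀)) ⊆ D, and let R ≥ R₀ and D_R = D ∩ B(x₀, R). Then D_R satisfies condition (B') with δ = R₀/2 and α = R/√(R² + (R₀/2)²); moreover, for each x ∈ ∂D_R the unit vector l_x = (x₀ − x)/|x₀ − x| works, i.e. C(y, l_x, α) ∩ B(x, R₀/2) ⊆ cl(D_R) for every y ∈ B(x, R₀/2) ∩ ∂D_R. -/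
/-! Fix boundary points `x`, `y` of `D_R = D ∩ B(x₀, R)` with `|x - y| < R₀/2` and `z` in the
cone, and put `u = z - y`, `v = x₀ - x`, so that `R₀ ≤ |v| ≤ R` and `|u| < R₀`. The angle between
`u` and `v` has cosine at least `α`, hence sine at most `(R₀/2)/√(R² + (R₀/2)²)`, which keeps the
ray `{x + s u | s ≥ 1}` within `R₀/2` of `x₀` (if the ray starts beyond the foot of the
perpendicular from `x₀`, then `|u| < R₀ ≤ |v|` bounds the overshoot). Shifting back by `x - y`,
the point `y + s u` lies in `B(x₀, R₀) ⊆ D_R`, and `z` lies on the segment from `y ∈ cl D_R` to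
it; the closure of the convex set `D_R` is convex. -/

open MeasureTheory ProbabilityTheory Set RealInnerProductSpace

noncomputable section

open Metric

theorem sq_two_mul_one_sub_add_sq_mul_one_sub_sq_le {δ R L : ℝ} (hδ : 0 < δ) (hδR : δ ≤ R)
    (hL : 0 ≤ L) (hLR : L ≤ R) :
    (2 * δ * (1 - R / √(R ^ 2 + δ ^ 2))) ^ 2 + L ^ 2 * (1 - (R / √(R ^ 2 + δ ^ 2)) ^ 2) ≤
      δ ^ 2 := by
  set S := √(R ^ 2 + δ ^ 2)
  have hS2 : S ^ 2 = R ^ 2 + δ ^ 2 := Real.sq_sqrt (by positivity)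
  have hSR : R < S := Real.lt_sqrt_of_sq_lt (by nlinarith)
  -- `(S - R)(S + R) = δ²` with `S + R ≥ 2δ`, so `S - R ≤ δ / 2`
  have hgap : 2 * (S - R) ≤ δ := by nlinarith
  have hS : 0 < S := by linarith
  rw [div_pow, hS2, ← sub_nonneg]
  have key : δ ^ 2 - ((2 * δ * (1 - R / S)) ^ 2 + L ^ 2 * (1 - R ^ 2 / (R ^ 2 + δ ^ 2)))
      = δ ^ 2 * ((δ ^ 2 - 4 * (S - R) ^ 2) + (R ^ 2 - L ^ 2)) / S ^ 2 := by
    field_simp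
    rw [hS2]
    ring
  rw [key]
  have : 4 * (S - R) ^ 2 ≤ δ ^ 2 := by nlinarith
  have : L ^ 2 ≤ R ^ 2 := by nlinarith
  positivity

section InnerProductSpace

variable {E : Type*} [NormedAddCommGroup E] [InnerProductSpace ℝ E]

theorem norm_smul_sub_sq_le_of_mul_le_inner {u v : E} {α s : ℝ} (hs : 0 ≤ s)
    (huv : α * ‖u‖ * ‖v‖ ≤ ⟪u, v⟫) :
    ‖s • u - v‖ ^ 2 ≤ (s * ‖u‖ - α * ‖v‖) ^ 2 + ‖v‖ ^ 2 * (1 - α ^ 2) := by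
  rw [norm_sub_sq_real, real_inner_smul_left, norm_smul, Real.norm_of_nonneg hs]
  nlinarith [mul_le_mul_of_nonneg_left huv hs]

theorem exists_one_le_norm_smul_sub_le {u v : E} {δ R : ℝ} (hu : u ≠ 0) (hu2δ : ‖u‖ < 2 * δ)
    (hv2δ : 2 * δ ≤ ‖v‖) (hvR : ‖v‖ ≤ R)
    (huv : R / √(R ^ 2 + δ ^ 2) * ‖u‖ * ‖v‖ ≤ ⟪u, v⟫) :
    ∃ s : ℝ, 1 ≤ s ∧ ‖s • u - v‖ ≤ δ := by
  set α := R / √(R ^ 2 + δ ^ 2)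
  have hδ : 0 < δ := by linarith [norm_nonneg u]
  have hα : 0 ≤ α := div_nonneg (by linarith [norm_nonneg v]) (Real.sqrt_nonneg _)
  have hu0 : 0 < ‖u‖ := norm_pos_iff.2 hu
  obtain ⟨s, hs, hdev⟩ : ∃ s : ℝ, 1 ≤ s ∧ (s * ‖u‖ - α * ‖v‖) ^ 2 ≤ (2 * δ * (1 - α)) ^ 2 := by
    rcases le_or_gt ‖u‖ (α * ‖v‖) with h | h
    · refine ⟨α * ‖v‖ / ‖u‖, (one_le_div hu0).2 h, ?_⟩
      rw [div_mul_cancel₀ _ hu0.ne', sub_self, zero_pow two_ne_zero]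
      positivity
    · refine ⟨1, le_rfl, pow_le_pow_left₀ (by linarith) ?_ 2⟩
      nlinarith [mul_le_mul_of_nonneg_left hv2δ hα]
  refine ⟨s, hs, pow_le_pow_iff_left₀ (norm_nonneg _) hδ.le two_ne_zero |>.1 ?_⟩
  calc ‖s • u - v‖ ^ 2 ≤ (s * ‖u‖ - α * ‖v‖) ^ 2 + ‖v‖ ^ 2 * (1 - α ^ 2) :=
        norm_smul_sub_sq_le_of_mul_le_inner (by linarith) huv
    _ ≤ (2 * δ * (1 - α)) ^ 2 + ‖v‖ ^ 2 * (1 - α ^ 2) := by gcongr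
    _ ≤ δ ^ 2 := sq_two_mul_one_sub_add_sq_mul_one_sub_sq_le hδ (by linarith) (norm_nonneg v) hvR

theorem Convex.mem_of_add_smul_sub_mem {C : Set E} (hC : Convex ℝ C) {y z : E} {s : ℝ}
    (hy : y ∈ C) (hs : 1 ≤ s) (hw : y + s • (z - y) ∈ C) : z ∈ C := by
  have hs0 : s ≠ 0 := by positivity
  have hz : y + s⁻¹ • (y + s • (z - y) - y) = z := by
    rw [add_sub_cancel_left, smul_smul, inv_mul_cancel₀ hs0, one_smul, add_sub_cancel]
  exact hz ▸ hC.add_smul_sub_mem hy hw ⟨by positivity, inv_le_one_of_one_le₀ hs⟩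

end InnerProductSpace

theorem le_dist_of_mem_frontier {X : Type*} [PseudoMetricSpace X] {U : Set X} (hU : IsOpen U)
    {x₀ p : X} {r : ℝ} (hr : ball x₀ r ⊆ U) (hp : p ∈ frontier U) : r ≤ dist p x₀ := by
  rw [hU.frontier_eq] at hp
  exact not_lt.1 fun h => hp.2 (hr (mem_ball.2 h))

theorem dist_le_of_mem_closure {X : Type*} [PseudoMetricSpace X] {U : Set X} {x₀ p : X} {R : ℝ}
    (hR : U ⊆ ball x₀ R) (hp : p ∈ closure U) : dist p x₀ ≤ R :=
  mem_closedBall.1 (closure_ball_subset_closedBall (closure_mono hR hp))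

theorem cone_inter_ball_subset_closure {d : ℕ} {C : Set (Euc d)} (hCopen : IsOpen C)
    (hCconv : Convex ℝ C) {x₀ x : Euc d} {R₀ R : ℝ} (hR₀ : ball x₀ R₀ ⊆ C) (hR : C ⊆ ball x₀ R)
    (hx : x ∈ frontier C) : ∀ y ∈ ball x (R₀ / 2) ∩ frontier C,
    cone y (‖x₀ - x‖⁻¹ • (x₀ - x)) (R / √(R ^ 2 + (R₀ / 2) ^ 2)) ∩ ball x (R₀ / 2) ⊆
      closure C := by
  rintro y hy z ⟨hz, hzx⟩
  have hyC : y ∈ closure C := frontier_subset_closure hy.2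
  have hxy : dist x y < R₀ / 2 := by rw [dist_comm]; exact hy.1
  have hx₀ : R₀ ≤ ‖x₀ - x‖ := by
    rw [← dist_eq_norm, dist_comm]; exact le_dist_of_mem_frontier hCopen hR₀ hx
  have hxR : ‖x₀ - x‖ ≤ R := by
    rw [← dist_eq_norm, dist_comm]; exact dist_le_of_mem_closure hR (frontier_subset_closure hx)
  rcases eq_or_ne z y with rfl | hzy
  · exact hyC
  have hz' : R / √(R ^ 2 + (R₀ / 2) ^ 2) * ‖z - y‖ * ‖x₀ - x‖ ≤ ⟪z - y, x₀ - x⟫ := by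
    have hpos : 0 < ‖x₀ - x‖ := by linarith [dist_nonneg (x := x) (y := y)]
    rw [cone, mem_ofPred_eq, real_inner_smul_right, le_inv_mul_iff₀ hpos] at hz
    linarith
  have hzy_lt : ‖z - y‖ < 2 * (R₀ / 2) := by
    rw [← dist_eq_norm]
    linarith [dist_triangle z x y, mem_ball.1 hzx]
  obtain ⟨s, hs, hsv⟩ := exists_one_le_norm_smul_sub_le (sub_ne_zero.2 hzy) hzy_lt
    (by linarith) hxR hz'
  refine hCconv.closure.mem_of_add_smul_sub_mem hyC hs (subset_closure (hR₀ ?_))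
  rw [mem_ball, dist_eq_norm]
  calc ‖y + s • (z - y) - x₀‖ = ‖(s • (z - y) - (x₀ - x)) - (x - y)‖ := by congr 1; abel
    _ ≤ ‖s • (z - y) - (x₀ - x)‖ + ‖x - y‖ := norm_sub_le _ _
    _ < R₀ := by rw [← dist_eq_norm x y]; linarith

theorem stmt5_general {d : ℕ} (D : Set (Euc d)) (hDopen : IsOpen D)
    (hDconv : Convex ℝ D) (x₀ : Euc d) (R₀ R : ℝ) (hR₀ : 0 < R₀)
    (hball : Metric.closedBall x₀ R₀ ⊆ D) (hR : R₀ ≤ R) :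
    CondB' (D ∩ Metric.ball x₀ R) (R₀ / 2) (R / Real.sqrt (R ^ 2 + (R₀ / 2) ^ 2)) ∧
      ∀ x ∈ frontier (D ∩ Metric.ball x₀ R),
        ∀ y ∈ Metric.ball x (R₀ / 2) ∩ frontier (D ∩ Metric.ball x₀ R),
          cone y (‖x₀ - x‖⁻¹ • (x₀ - x)) (R / Real.sqrt (R ^ 2 + (R₀ / 2) ^ 2)) ∩
              Metric.ball x (R₀ / 2) ⊆
            closure (D ∩ Metric.ball x₀ R) := by
  have hopen : IsOpen (D ∩ ball x₀ R) := hDopen.inter isOpen_ball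
  have hball' : ball x₀ R₀ ⊆ D ∩ ball x₀ R :=
    subset_inter (ball_subset_closedBall.trans hball) (ball_subset_ball hR)
  have hcone := fun x (hx : x ∈ frontier (D ∩ ball x₀ R)) =>
    cone_inter_ball_subset_closure hopen (hDconv.inter (convex_ball x₀ R)) hball'
      inter_subset_right hx
  refine ⟨fun x hx => ⟨_, norm_smul_inv_norm ?_, hcone x hx⟩, hcone⟩
  have := le_dist_of_mem_frontier hopen hball' hx
  rw [sub_ne_zero, ← dist_pos, dist_comm]
  linarith

/-- if `D` is a convex domain, `cl(B(x₀,R₀)) ⊆ D` with `R₀ > 0` and `R ≥ R₀`,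
then `D_R = D ∩ B(x₀,R)` satisfies condition (B') with `δ = R₀/2` and
`α = R/√(R² + (R₀/2)²)`; moreover for each `x ∈ ∂D_R` the unit vector
`l_x = (x₀ − x)/|x₀ − x|` works. -/
theorem stmt5 {d : ℕ} (D : Set (Euc d)) (hDopen : IsOpen D) (hDne : D.Nonempty)
    (hDconv : Convex ℝ D) (x₀ : Euc d) (hx₀ : x₀ ∈ D) (R₀ R : ℝ) (hR₀ : 0 < R₀)
    (hball : Metric.closedBall x₀ R₀ ⊆ D) (hR : R₀ ≤ R) :
    CondB' (D ∩ Metric.ball x₀ R) (R₀ / 2) (R / Real.sqrt (R ^ 2 + (R₀ / 2) ^ 2)) ∧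
      ∀ x ∈ frontier (D ∩ Metric.ball x₀ R),
        ∀ y ∈ Metric.ball x (R₀ / 2) ∩ frontier (D ∩ Metric.ball x₀ R),
          cone y (‖x₀ - x‖⁻¹ • (x₀ - x)) (R / Real.sqrt (R ^ 2 + (R₀ / 2) ^ 2)) ∩
              Metric.ball x (R₀ / 2) ⊆
            closure (D ∩ Metric.ball x₀ R) :=
  stmt5_general D hDopen hDconv x₀ R₀ R hR₀ hball hR

end
end

section
/- Let D be a convex domain in ℝ^d, x₀ ∈ D, R₀ > 0 with cl(B(x₀, R₀)) ⊆ D. Let q ≥ 1, let ω be a control function, and let w : [0,T] → ℝ^d be a continuous path with w(0) ∈ cl(D) satisfying |w(t) − w(s)| ≤ ω(s,t)^{1/q} for all 0 ≤ s ≤ t ≤ T. If (ξ, φ) solves the Skorohod problem for w on D, then, with M = max_{0 ≤ t ≤ T} |ξ(t) − x₀|, for all 0 ≤ s ≤ t ≤ T: ‖φ‖_{[s,t]} ≤ 10 [ {16 R₀^{−1} (1 + 4 R₀^{−2} M²)^{1/2} + 1}^q ω(s,t) + 1 ] (1 + 4 R₀^{−2} M²) ‖w‖_{∞,[s,t]}.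 -/
open MeasureTheory ProbabilityTheory Set RealInnerProductSpace

noncomputable section

/-- `(ξ, φ)` solves the Skorohod problem for `w` on `D` over `[0,T]`, with representing
finite measure `μ` and direction function `nv`: `ξ` stays in `cl(D)`, `ξ = w + φ`,
`φ(t) = ∫_{[0,t]} nv dμ`, `‖φ‖_{[0,t]} = μ([0,t])`, `μ` is carried by the times where
`ξ` is on the boundary, and `nv(s) ∈ N_{ξ(s)}` for `μ`-a.e. `s`. -/
structure IsSkorohodSolution {d : ℕ} (D : Set (Euc d)) (T : ℝ) (w ξ φ : ℝ → Euc d)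
    (μ : Measure ℝ) (nv : ℝ → Euc d) : Prop where
  cont_ξ : ContinuousOn ξ (Icc 0 T)
  cont_φ : ContinuousOn φ (Icc 0 T)
  mem : ∀ t ∈ Icc 0 T, ξ t ∈ closure D
  init : ξ 0 = w 0
  decomp : ∀ t ∈ Icc 0 T, ξ t = w t + φ t
  φ_zero : φ 0 = 0
  finite : IsFiniteMeasure μ
  carrier : μ (Icc 0 T)ᶜ = 0
  meas_nv : Measurable nv
  repr : ∀ t ∈ Icc 0 T, φ t = ∫ s in Icc 0 t, nv s ∂μ
  total_var : ∀ t ∈ Icc 0 T, eVariationOn φ (Icc 0 t) = μ (Icc 0 t)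
  bdry : μ {s | ξ s ∉ frontier D} = 0
  normal : ∀ᵐ s ∂μ, nv s ∈ normalCone D (ξ s)

/-- `‖w‖_{∞,[s,t]} = max_{s ≤ u ≤ v ≤ t} |w(u) − w(v)|`. -/
def supOsc {d : ℕ} (w : ℝ → Euc d) (s t : ℝ) : ℝ :=
  ⨆ p : Icc s t × Icc s t, ‖w p.1.1 - w p.2.1‖

/-- Total variation `‖φ‖_{[s,t]}` as a real number. -/
def totalVar {d : ℕ} (φ : ℝ → Euc d) (s t : ℝ) : ℝ :=
  (eVariationOn φ (Icc s t)).toReal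

/-- A control function on the simplex over `[0,T]`. -/
structure IsControl (T : ℝ) (ω : ℝ → ℝ → ℝ) : Prop where
  nonneg : ∀ s t, 0 ≤ s → s ≤ t → t ≤ T → 0 ≤ ω s t
  cont : ContinuousOn (fun p : ℝ × ℝ => ω p.1 p.2) {p | 0 ≤ p.1 ∧ p.1 ≤ p.2 ∧ p.2 ≤ T}
  superadd : ∀ s u t, 0 ≤ s → s ≤ u → u ≤ t → t ≤ T → ω s u + ω u t ≤ ω s t

/-! On an interval `(a, b]` on which `w` oscillates by `o ≤ R₀ / 2`, put `ν = μ (a, b]` and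
`Δ = ∫_{(a, b]} n dμ`. Each normal `n(u)` satisfies `R₀ ≤ ⟪n(u), x₀ - ξ(u)⟫` (the ball around `x₀`
lies in `D`) and `⟪n(u), ξ(u) - ξ(a)⟫ ≤ 0` (convexity). Integrating these against `μ` on `(a, b]`
gives, with `I = ∫ ⟪n(u), φ(u) - φ(a)⟫ dμ(u)`, both `R₀ ν + I ≤ M ‖Δ‖ + o ν` and `I ≤ o ν`, while
symmetrizing the double integral `I` gives `‖Δ‖² ≤ 2 I`. Hence `R₀ ν ≤ 2 M ‖Δ‖` and
`ν ≤ 8 M² o / R₀²`. Finally `[s, t]` is cut into at most `ω(s, t) (2 / R₀) ^ q + 1` intervals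
of control at most `(R₀ / 2) ^ q`, on each of which `o ≤ R₀ / 2`. -/

lemma le_mul_of_linear_and_quadratic_bounds {R o ν M δ I : ℝ} (hR : 0 < R) (ho : 0 ≤ o)
    (hoR : o ≤ R / 2) (hν : 0 ≤ ν) (hlin : R * ν + I ≤ M * δ + o * ν)
    (hI : I ≤ o * ν) (hquad : δ ^ 2 ≤ 2 * I) : ν ≤ 8 * M ^ 2 / R ^ 2 * o := by
  have hhalf : R * ν ≤ 2 * M * δ := by nlinarith
  have hsq : R ^ 2 * ν * ν ≤ 8 * M ^ 2 * o * ν := by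
    nlinarith [mul_le_mul hhalf hhalf (mul_nonneg hR.le hν) ((mul_nonneg hR.le hν).trans hhalf)]
  rcases hν.eq_or_lt with rfl | hν
  · positivity
  · rw [div_mul_eq_mul_div, le_div_iff₀ (by positivity)]
    nlinarith

lemma Icc_disjoint_Ioc {α : Type*} [Preorder α] (a b c : α) : Disjoint (Icc a b) (Ioc b c) :=
  (Iic_disjoint_Ioi le_rfl).mono Icc_subset_Iic_self Ioc_subset_Ioi_self

section Symmetrization

variable {E : Type*} [NormedAddCommGroup E] [InnerProductSpace ℝ E] {κ : Measure ℝ} {n : ℝ → E}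

lemma integrable_inner_comp_fst_snd (hn : Integrable n κ) :
    Integrable (fun p : ℝ × ℝ => ⟪n p.1, n p.2⟫) (κ.prod κ) :=
  (hn.norm.mul_prod hn.norm).mono'
    ((hn.1.comp_quasiMeasurePreserving Measure.quasiMeasurePreserving_fst).inner
      (hn.1.comp_quasiMeasurePreserving Measure.quasiMeasurePreserving_snd))
    (.of_forall fun _ => norm_inner_le_norm _ _)

variable [CompleteSpace E]

lemma integral_indicator_inner_comp_fst_snd (hn : Integrable n κ) (u : ℝ) :
    ∫ v, {p : ℝ × ℝ | p.2 ≤ p.1}.indicator (fun p => ⟪n p.1, n p.2⟫) (u, v) ∂κ =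
      ⟪n u, ∫ v in Iic u, n v ∂κ⟫ := by
  rw [← integral_inner hn.integrableOn, ← integral_indicator measurableSet_Iic]
  rfl

variable [SFinite κ]

lemma integrable_inner_setIntegral_Iic (hn : Integrable n κ) :
    Integrable (fun u => ⟪n u, ∫ v in Iic u, n v ∂κ⟫) κ := by
  simpa only [integral_indicator_inner_comp_fst_snd hn] using
    ((integrable_inner_comp_fst_snd hn).indicator
      (measurableSet_le measurable_snd measurable_fst)).integral_prod_left

/-- The Stieltjes chain rule inequality `d‖φ‖² ≤ 2 ⟪dφ, φ⟫` for `φ(u) = ∫_{(-∞,u]} n dκ`: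
split the double integral of `⟪n u, n v⟫` along the diagonal and swap the variables in the upper
half. -/
lemma norm_integral_sq_le_two_mul_integral_inner_setIntegral_Iic (hn : Integrable n κ) :
    ‖∫ u, n u ∂κ‖ ^ 2 ≤ 2 * ∫ u, ⟪n u, ∫ v in Iic u, n v ∂κ⟫ ∂κ := by
  set L := {p : ℝ × ℝ | p.2 ≤ p.1}
  set G := fun p : ℝ × ℝ => ⟪n p.1, n p.2⟫
  have hG := integrable_inner_comp_fst_snd hn
  have hF : Integrable (L.indicator G) (κ.prod κ) :=
    hG.indicator (measurableSet_le measurable_snd measurable_fst)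
  have hFswap : Integrable (fun p : ℝ × ℝ => L.indicator G p.swap) (κ.prod κ) := hF.swap
  have hhalf : ∫ u, ⟪n u, ∫ v in Iic u, n v ∂κ⟫ ∂κ = ∫ p, L.indicator G p ∂κ.prod κ := by
    simp_rw [← integral_indicator_inner_comp_fst_snd hn]
    exact integral_integral hF
  have hfull : ‖∫ u, n u ∂κ‖ ^ 2 = ∫ p, G p ∂κ.prod κ := by
    rw [← real_inner_self_eq_norm_sq, ← integral_inner hn,
      ← integral_integral (f := fun u v => ⟪n u, n v⟫) hG]
    simp only [integral_inner hn, real_inner_comm]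
  have hle : ∀ p, G p ≤ L.indicator G p + L.indicator G p.swap := by
    rintro ⟨u, v⟩
    by_cases hvu : v ≤ u <;> by_cases huv : u ≤ v
    · obtain rfl := le_antisymm hvu huv
      simp [L, G, indicator_of_mem]
    · simp [L, G, hvu, huv]
    · simp [L, G, hvu, huv, real_inner_comm]
    · exact absurd (le_of_not_ge huv) hvu
  calc ‖∫ u, n u ∂κ‖ ^ 2 ≤ ∫ p, (L.indicator G p + L.indicator G p.swap) ∂κ.prod κ :=
        hfull ▸ integral_mono hG (hF.add hFswap) hle
    _ = 2 * ∫ u, ⟪n u, ∫ v in Iic u, n v ∂κ⟫ ∂κ := by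
        rw [integral_add hF hFswap, integral_prod_swap, hhalf, two_mul]

end Symmetrization

section NormalCone

variable {d : ℕ} {D : Set (Euc d)} {x n : Euc d}

lemma norm_eq_one_of_mem_normalCone (hn : n ∈ normalCone D x) : ‖n‖ = 1 := by
  obtain ⟨r, -, hn⟩ := mem_iUnion₂.1 hn
  exact hn.1

/-- For small `λ > 0` the point `x + λ (y - x)` of `cl D` would otherwise lie in the ball
`B(x - r n, r)` that `D` avoids. -/
lemma inner_sub_nonneg_of_mem_normalCone (hD : Convex ℝ D) (hx : x ∈ closure D)
    (hn : n ∈ normalCone D x) {y : Euc d} (hy : y ∈ closure D) : 0 ≤ ⟪n, y - x⟫ := by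
  obtain ⟨r, hr, hn1, hball⟩ := mem_iUnion₂.1 hn
  have hdisj : Disjoint (closure D) (Metric.ball (x - r • n) r) :=
    (disjoint_iff_inter_eq_empty.2 hball).symm.closure_left Metric.isOpen_ball
  by_contra! hneg
  set v := y - x
  set lam := min 1 (-(r * ⟪n, v⟫) / (‖v‖ ^ 2 + 1))
  have hlam0 : 0 < lam := lt_min one_pos (div_pos (by nlinarith) (by positivity))
  have hlam_small : lam * ‖v‖ ^ 2 < -(2 * r * ⟪n, v⟫) := by
    have := (le_div_iff₀ (by positivity)).1 (min_le_right 1 (-(r * ⟪n, v⟫) / (‖v‖ ^ 2 + 1)))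
    nlinarith
  have hmem : x + lam • v ∈ closure D :=
    hD.closure.add_smul_sub_mem hx hy ⟨hlam0.le, min_le_left _ _⟩
  have hnorm_sq : ‖lam • v + r • n‖ ^ 2 < r ^ 2 := by
    rw [norm_add_sq_real, real_inner_smul_left, real_inner_smul_right, real_inner_comm,
      norm_smul, norm_smul, hn1, Real.norm_of_nonneg hlam0.le, Real.norm_of_nonneg hr.le]
    nlinarith
  have hin : x + lam • v ∈ Metric.ball (x - r • n) r := by
    rw [Metric.mem_ball, dist_eq_norm, show x + lam • v - (x - r • n) = lam • v + r • n by abel]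
    exact abs_lt_of_sq_lt_sq' hnorm_sq hr.le |>.2
  exact hdisj.notMem_of_mem_left hmem hin

lemma le_inner_sub_of_mem_normalCone (hD : Convex ℝ D) {x₀ : Euc d} {R : ℝ} (hR : 0 ≤ R)
    (hball : Metric.closedBall x₀ R ⊆ D) (hx : x ∈ closure D) (hn : n ∈ normalCone D x) :
    R ≤ ⟪n, x₀ - x⟫ := by
  have hy : x₀ - R • n ∈ closure D := subset_closure <| hball <| by
    rw [Metric.mem_closedBall, dist_eq_norm, sub_sub_cancel_left, norm_neg, norm_smul,
      norm_eq_one_of_mem_normalCone hn, mul_one, Real.norm_of_nonneg hR]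
  have h := inner_sub_nonneg_of_mem_normalCone hD hx hn hy
  rw [show x₀ - R • n - x = (x₀ - x) - R • n by abel, inner_sub_right, real_inner_smul_right,
    real_inner_self_eq_norm_sq, norm_eq_one_of_mem_normalCone hn] at h
  linarith

end NormalCone

section Oscillation

variable {d : ℕ} {w : ℝ → Euc d}

lemma supOsc_nonneg (s t : ℝ) : 0 ≤ supOsc w s t :=
  Real.iSup_nonneg fun _ => norm_nonneg _

lemma norm_sub_le_supOsc {s t : ℝ} (hw : ContinuousOn w (Icc s t)) {u v : ℝ}
    (hu : u ∈ Icc s t) (hv : v ∈ Icc s t) : ‖w u - w v‖ ≤ supOsc w s t := by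
  have hbdd : BddAbove (range fun p : Icc s t × Icc s t => ‖w p.1.1 - w p.2.1‖) := by
    obtain ⟨C, hC⟩ := isCompact_Icc.exists_bound_of_continuousOn hw
    refine ⟨C + C, forall_mem_range.2 fun p => ?_⟩
    exact (norm_sub_le _ _).trans (add_le_add (hC _ p.1.2) (hC _ p.2.2))
  exact le_ciSup hbdd (⟨⟨u, hu⟩, ⟨v, hv⟩⟩ : Icc s t × Icc s t)

lemma supOsc_mono {s t a b : ℝ} (hw : ContinuousOn w (Icc s t)) (hsa : s ≤ a) (hbt : b ≤ t) :
    supOsc w a b ≤ supOsc w s t :=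
  Real.iSup_le (fun p => norm_sub_le_supOsc hw (Icc_subset_Icc hsa hbt p.1.2)
    (Icc_subset_Icc hsa hbt p.2.2)) (supOsc_nonneg s t)

lemma supOsc_le_of_forall_le {s t C : ℝ} (hC : 0 ≤ C)
    (h : ∀ u ∈ Icc s t, ∀ v ∈ Icc s t, u ≤ v → ‖w v - w u‖ ≤ C) : supOsc w s t ≤ C := by
  refine Real.iSup_le (fun ⟨⟨u, hu⟩, ⟨v, hv⟩⟩ => ?_) hC
  rcases le_total u v with huv | hvu
  · rw [norm_sub_rev]; exact h u hu v hv huv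
  · exact h v hv u hu hvu

end Oscillation

namespace IsControl

variable {T : ℝ} {ω : ℝ → ℝ → ℝ}

lemma apply_self (hω : IsControl T ω) {a : ℝ} (ha : 0 ≤ a) (haT : a ≤ T) : ω a a = 0 :=
  le_antisymm (by linarith [hω.superadd a a a ha le_rfl le_rfl haT]) (hω.nonneg a a ha le_rfl haT)

lemma mono (hω : IsControl T ω) {a u v b : ℝ} (ha : 0 ≤ a) (hau : a ≤ u) (huv : u ≤ v)
    (hvb : v ≤ b) (hbT : b ≤ T) : ω u v ≤ ω a b := by
  linarith [hω.superadd a u v ha hau huv (hvb.trans hbT),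
    hω.superadd a v b ha (hau.trans huv) hvb hbT, hω.nonneg a u ha hau (huv.trans (hvb.trans hbT)),
    hω.nonneg v b (ha.trans (hau.trans huv)) hvb hbT]

lemma supOsc_le_of_le_rpow (hω : IsControl T ω) {d : ℕ} {w : ℝ → Euc d} {q C : ℝ} (hq : 0 < q)
    (hC : 0 ≤ C) (hw : ∀ s t, 0 ≤ s → s ≤ t → t ≤ T → ‖w t - w s‖ ≤ ω s t ^ (1 / q))
    {a b : ℝ} (ha : 0 ≤ a) (hbT : b ≤ T) (hωab : ω a b ≤ C ^ q) :
    supOsc w a b ≤ C := by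
  refine supOsc_le_of_forall_le hC fun u hu v hv huv => (hw u v (ha.trans hu.1) huv
    (hv.2.trans hbT)).trans ?_
  calc ω u v ^ (1 / q) ≤ (C ^ q) ^ (1 / q) := by
        gcongr
        · exact hω.nonneg u v (ha.trans hu.1) huv (hv.2.trans hbT)
        · exact (hω.mono ha hu.1 huv hv.2 hbT).trans hωab
    _ = C := by rw [one_div, Real.rpow_rpow_inv hC hq.ne']

/-- Chaining: cut `[s, t]` greedily into at most `⌊ω(s,t)/c⌋ + 1` pieces of control at most
`c`, which is possible since `ω(a, ·)` is continuous and `ω(a, b) + ω(b, t) ≤ ω(a, t)`. -/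
lemma le_div_add_one_mul_of_local_bound (hω : IsControl T ω) {c K s t : ℝ} (hc : 0 < c)
    (hs : 0 ≤ s) (hst : s ≤ t) (htT : t ≤ T) (m : ℝ → ℝ → ℝ)
    (hadd : ∀ a b, s ≤ a → a ≤ b → b ≤ t → m a t = m a b + m b t)
    (hloc : ∀ a b, s ≤ a → a ≤ b → b ≤ t → ω a b ≤ c → m a b ≤ K) :
    m s t ≤ (ω s t / c + 1) * K := by
  have hK : 0 ≤ K := by
    have hss := hadd s s le_rfl le_rfl hst
    have := hloc s s le_rfl le_rfl hst (by rw [hω.apply_self hs (hst.trans htT)]; exact hc.le)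
    linarith
  have hpieces : ∀ k : ℕ, ∀ a, s ≤ a → a ≤ t → ω a t < (k + 1) * c → m a t ≤ (k + 1) * K := by
    intro k
    induction k with
    | zero =>
      intro a hsa hat hωa
      simpa using hloc a t hsa hat le_rfl (by simpa using hωa.le)
    | succ k ih =>
      intro a hsa hat hωa
      have ha : 0 ≤ a := hs.trans hsa
      by_cases hsmall : ω a t ≤ c
      · have := hloc a t hsa hat le_rfl hsmall
        push_cast
        nlinarith [(k.cast_nonneg : (0 : ℝ) ≤ k)]
      have hcont : ContinuousOn (ω a) (Icc a t) :=
        hω.cont.comp (continuous_const.prodMk continuous_id).continuousOn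
          fun v hv => ⟨ha, hv.1, hv.2.trans htT⟩
      obtain ⟨b, ⟨hab, hbt⟩, hb⟩ := intermediate_value_Icc hat hcont
        ⟨by rw [hω.apply_self ha (hat.trans htT)]; exact hc.le, (not_le.1 hsmall).le⟩
      have hsplit := hω.superadd a b t ha hab hbt htT
      have hbt' := ih b (hsa.trans hab) hbt (by push_cast at hωa; linarith)
      rw [hadd a b hsa hab hbt]
      push_cast
      linarith [hloc a b hsa hab hbt hb.le]
  have hn := hpieces ⌊ω s t / c⌋₊ s le_rfl hst <| by
    rw [← div_lt_iff₀ hc]; exact Nat.lt_floor_add_one _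
  exact hn.trans (mul_le_mul_of_nonneg_right
    (by linarith [Nat.floor_le (div_nonneg (hω.nonneg s t hs hst htT) hc.le)]) hK)

end IsControl

namespace IsSkorohodSolution

variable {d : ℕ} {D : Set (Euc d)} {T : ℝ} {w ξ φ : ℝ → Euc d} {μ : Measure ℝ}
  {nv : ℝ → Euc d}

lemma ae_norm_nv_eq_one (hsol : IsSkorohodSolution D T w ξ φ μ nv) : ∀ᵐ u ∂μ, ‖nv u‖ = 1 :=
  hsol.normal.mono fun _ => norm_eq_one_of_mem_normalCone

lemma integrable_nv (hsol : IsSkorohodSolution D T w ξ φ μ nv) : Integrable nv μ :=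
  have := hsol.finite
  (integrable_const (1 : ℝ)).mono' hsol.meas_nv.aestronglyMeasurable
    (hsol.ae_norm_nv_eq_one.mono fun _ h => h.le)

lemma sub_eq_setIntegral_Ioc (hsol : IsSkorohodSolution D T w ξ φ μ nv) {a u : ℝ} (ha : 0 ≤ a)
    (hau : a ≤ u) (huT : u ≤ T) : φ u - φ a = ∫ v in Ioc a u, nv v ∂μ := by
  rw [hsol.repr u ⟨ha.trans hau, huT⟩, hsol.repr a ⟨ha, hau.trans huT⟩,
    ← Icc_union_Ioc_eq_Icc ha hau, setIntegral_union (Icc_disjoint_Ioc _ _ _) measurableSet_Ioc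
      hsol.integrable_nv.integrableOn hsol.integrable_nv.integrableOn, add_sub_cancel_left]

lemma totalVar_eq (hsol : IsSkorohodSolution D T w ξ φ μ nv) {s t : ℝ} (hs : 0 ≤ s)
    (hst : s ≤ t) (htT : t ≤ T) : totalVar φ s t = μ.real (Ioc s t) := by
  have := hsol.finite
  have h := eVariationOn.Icc_add_Icc φ hs hst (mem_univ s)
  simp only [univ_inter] at h
  rw [hsol.total_var s ⟨hs, hst.trans htT⟩, hsol.total_var t ⟨hs.trans hst, htT⟩,
    ← Icc_union_Ioc_eq_Icc hs hst, measure_union (Icc_disjoint_Ioc _ _ _) measurableSet_Ioc] at h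
  rw [totalVar, measureReal_def, (ENNReal.add_right_inj (measure_ne_top μ _)).1 h]

variable {x₀ : Euc d} {R₀ : ℝ}

/-- Expand `x₀ - ξ u = (x₀ - ξ a) - (φ u - φ a) - (w u - w a)` and test the normal `nv u` against
`x₀ - R₀ • nv u` and `ξ a`. -/
lemma inner_nv_sub_le (hsol : IsSkorohodSolution D T w ξ φ μ nv) (hD : Convex ℝ D)
    (hR₀ : 0 ≤ R₀) (hball : Metric.closedBall x₀ R₀ ⊆ D) {a u : ℝ} (ha : a ∈ Icc 0 T)
    (hu : u ∈ Icc 0 T) (hn : nv u ∈ normalCone D (ξ u)) :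
    R₀ + ⟪nv u, φ u - φ a⟫ ≤ ⟪x₀ - ξ a, nv u⟫ + ‖w u - w a‖ ∧
      ⟪nv u, φ u - φ a⟫ ≤ ‖w u - w a‖ := by
  have hR := le_inner_sub_of_mem_normalCone hD hR₀ hball (hsol.mem u hu) hn
  have hξa := inner_sub_nonneg_of_mem_normalCone hD (hsol.mem u hu) hn (hsol.mem a ha)
  have hw : |⟪nv u, w u - w a⟫| ≤ ‖w u - w a‖ := by
    simpa [norm_eq_one_of_mem_normalCone hn] using abs_real_inner_le_norm (nv u) (w u - w a)
  have hsplit : ∀ y, ⟪nv u, y - ξ u⟫ =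
      ⟪nv u, y - ξ a⟫ - ⟪nv u, φ u - φ a⟫ - ⟪nv u, w u - w a⟫ := fun y => by
    rw [← inner_sub_right, ← inner_sub_right, hsol.decomp u hu, hsol.decomp a ha]
    congr 1
    abel
  rw [hsplit, sub_self, inner_zero_right] at hξa
  rw [hsplit, real_inner_comm] at hR
  constructor <;> linarith [abs_le.1 hw]

lemma measureReal_Ioc_le (hsol : IsSkorohodSolution D T w ξ φ μ nv) (hD : Convex ℝ D)
    (hR₀ : 0 < R₀) (hball : Metric.closedBall x₀ R₀ ⊆ D) {M : ℝ}
    (hM : ∀ u ∈ Icc 0 T, ‖ξ u - x₀‖ ≤ M) {a b : ℝ} (hw : ContinuousOn w (Icc a b))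
    (ha : 0 ≤ a) (hab : a ≤ b) (hbT : b ≤ T) (hosc : supOsc w a b ≤ R₀ / 2) :
    μ.real (Ioc a b) ≤ 8 * M ^ 2 / R₀ ^ 2 * supOsc w a b := by
  have := hsol.finite
  set κ := μ.restrict (Ioc a b)
  set o := supOsc w a b
  set g := fun u => ⟪nv u, ∫ v in Iic u, nv v ∂κ⟫
  have hnv : Integrable nv κ := hsol.integrable_nv.restrict
  have hg : Integrable g κ := integrable_inner_setIntegral_Iic hnv
  have hincr : ∀ u ∈ Ioc a b, ∫ v in Iic u, nv v ∂κ = φ u - φ a := fun u hu => by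
    rw [Measure.restrict_restrict measurableSet_Iic, Iic_inter_Ioc_of_le hu.2,
      hsol.sub_eq_setIntegral_Ioc ha hu.1.le (hu.2.trans hbT)]
  have hpt : ∀ᵐ u ∂κ, R₀ + g u ≤ ⟪x₀ - ξ a, nv u⟫ + o ∧ g u ≤ o := by
    filter_upwards [ae_restrict_mem measurableSet_Ioc, ae_restrict_of_ae hsol.normal]
      with u hu hn
    have hwu : ‖w u - w a‖ ≤ o := norm_sub_le_supOsc hw ⟨hu.1.le, hu.2⟩ ⟨le_rfl, hab⟩
    obtain ⟨h1, h2⟩ := hsol.inner_nv_sub_le hD hR₀.le hball ⟨ha, hab.trans hbT⟩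
      ⟨ha.trans hu.1.le, hu.2.trans hbT⟩ hn
    simp only [g, hincr u hu]
    constructor <;> linarith
  have hupper : R₀ * μ.real (Ioc a b) + ∫ u, g u ∂κ ≤
      M * ‖∫ u, nv u ∂κ‖ + o * μ.real (Ioc a b) := by
    have h := integral_mono_ae ((integrable_const R₀).add hg)
      ((hnv.const_inner (x₀ - ξ a)).add (integrable_const o)) (hpt.mono fun _ h => h.1)
    rw [integral_add' (integrable_const R₀) hg,
      integral_add' (hnv.const_inner _) (integrable_const o), integral_const, integral_const,
      integral_inner hnv, measureReal_restrict_apply_univ] at h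
    have hC : ⟪x₀ - ξ a, ∫ u, nv u ∂κ⟫ ≤ M * ‖∫ u, nv u ∂κ‖ :=
      (real_inner_le_norm _ _).trans (mul_le_mul_of_nonneg_right
        (by rw [norm_sub_rev]; exact hM a ⟨ha, hab.trans hbT⟩) (norm_nonneg _))
    simp only [smul_eq_mul] at h
    linarith
  have hI : ∫ u, g u ∂κ ≤ o * μ.real (Ioc a b) := by
    have h := integral_mono_ae hg (integrable_const o) (hpt.mono fun _ h => h.2)
    rwa [integral_const, measureReal_restrict_apply_univ, smul_eq_mul, mul_comm] at h
  exact le_mul_of_linear_and_quadratic_bounds hR₀ (supOsc_nonneg a b) hosc measureReal_nonneg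
    hupper hI (norm_integral_sq_le_two_mul_integral_inner_setIntegral_Iic hnv)

end IsSkorohodSolution

lemma le_iSup_of_continuousOn {f : ℝ → ℝ} {a b : ℝ} (hf : ContinuousOn f (Icc a b)) {u : ℝ}
    (hu : u ∈ Icc a b) : f u ≤ ⨆ t : Icc a b, f t :=
  le_ciSup (f := fun t : Icc a b => f t)
    (by simpa only [image_eq_range] using isCompact_Icc.bddAbove_image hf) ⟨u, hu⟩

lemma div_half_rpow_add_one_mul_le {R₀ q ω : ℝ} (M : ℝ) (hR₀ : 0 < R₀) (hq : 0 ≤ q)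
    (hω : 0 ≤ ω) :
    (ω / (R₀ / 2) ^ q + 1) * (8 * M ^ 2 / R₀ ^ 2) ≤
      10 * ((16 * R₀⁻¹ * √(1 + 4 * R₀⁻¹ ^ 2 * M ^ 2) + 1) ^ q * ω + 1) *
        (1 + 4 * R₀⁻¹ ^ 2 * M ^ 2) := by
  set X := 4 * R₀⁻¹ ^ 2 * M ^ 2
  set K := 16 * R₀⁻¹ * √(1 + X) + 1
  have hX : 0 ≤ X := by positivity
  have hKge : 2 / R₀ ≤ K := by
    have : 1 ≤ √(1 + X) := Real.one_le_sqrt.2 (by linarith)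
    have : 2 / R₀ ≤ 16 * R₀⁻¹ := by rw [div_eq_mul_inv]; gcongr; norm_num
    nlinarith [inv_pos.2 hR₀]
  have hωK : ω / (R₀ / 2) ^ q ≤ K ^ q * ω := by
    rw [div_eq_mul_inv, ← Real.inv_rpow (by positivity), inv_div, mul_comm]
    gcongr
  have h8 : 8 * M ^ 2 / R₀ ^ 2 = 2 * X := by simp only [X]; field_simp; ring
  rw [h8]
  have hKq : 0 ≤ K ^ q * ω := mul_nonneg (Real.rpow_nonneg (by positivity) q) hω
  nlinarith

theorem stmt7_general {d : ℕ} (D : Set (Euc d))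
    (hDconv : Convex ℝ D) (x₀ : Euc d) (R₀ : ℝ) (hR₀ : 0 < R₀)
    (hball : Metric.closedBall x₀ R₀ ⊆ D)
    (T q : ℝ) (hq : 1 ≤ q) (ωc : ℝ → ℝ → ℝ) (hωc : IsControl T ωc)
    (w : ℝ → Euc d) (hw : ContinuousOn w (Icc 0 T))
    (hwq : ∀ s t, 0 ≤ s → s ≤ t → t ≤ T → ‖w t - w s‖ ≤ ωc s t ^ (1 / q))
    (ξ φ : ℝ → Euc d) (μ : Measure ℝ) (nv : ℝ → Euc d)
    (hsol : IsSkorohodSolution D T w ξ φ μ nv)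
    (M : ℝ) (hM : M = ⨆ t : Icc (0:ℝ) T, ‖ξ t.1 - x₀‖) :
    ∀ s t, 0 ≤ s → s ≤ t → t ≤ T →
      totalVar φ s t ≤
        10 * ((16 * R₀⁻¹ * Real.sqrt (1 + 4 * R₀⁻¹ ^ 2 * M ^ 2) + 1) ^ q * ωc s t + 1) *
          (1 + 4 * R₀⁻¹ ^ 2 * M ^ 2) * supOsc w s t := by
  intro s t hs hst htT
  have := hsol.finite
  have hMle : ∀ u ∈ Icc 0 T, ‖ξ u - x₀‖ ≤ M := fun u hu =>
    hM ▸ le_iSup_of_continuousOn (f := fun u => ‖ξ u - x₀‖)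
      (hsol.cont_ξ.sub continuousOn_const).norm hu
  have hq0 : 0 < q := one_pos.trans_le hq
  have hloc : ∀ a b, s ≤ a → a ≤ b → b ≤ t → ωc a b ≤ (R₀ / 2) ^ q →
      μ.real (Ioc a b) ≤ 8 * M ^ 2 / R₀ ^ 2 * supOsc w s t := fun a b hsa hab hbt hωab =>
    (hsol.measureReal_Ioc_le hDconv hR₀ hball hMle
      (hw.mono (Icc_subset_Icc (hs.trans hsa) (hbt.trans htT))) (hs.trans hsa) hab
      (hbt.trans htT) (hωc.supOsc_le_of_le_rpow hq0 (by positivity) hwq (hs.trans hsa)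
        (hbt.trans htT) hωab)).trans
      (by gcongr; exact supOsc_mono (hw.mono (Icc_subset_Icc hs htT)) hsa hbt)
  have hadd : ∀ a b, s ≤ a → a ≤ b → b ≤ t →
      μ.real (Ioc a t) = μ.real (Ioc a b) + μ.real (Ioc b t) := fun a b _ hab hbt => by
    rw [← Ioc_union_Ioc_eq_Ioc hab hbt,
      measureReal_union (Ioc_disjoint_Ioc_of_le le_rfl) measurableSet_Ioc]
  rw [hsol.totalVar_eq hs hst htT]
  calc μ.real (Ioc s t)
      ≤ (ωc s t / (R₀ / 2) ^ q + 1) * (8 * M ^ 2 / R₀ ^ 2 * supOsc w s t) :=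
        hωc.le_div_add_one_mul_of_local_bound (by positivity) hs hst htT _ hadd hloc
    _ ≤ _ := by
        rw [← mul_assoc]
        exact mul_le_mul_of_nonneg_right
          (div_half_rpow_add_one_mul_le M hR₀ hq0.le (hωc.nonneg s t hs hst htT))
          (supOsc_nonneg s t)

/-- estimate on the local time term of the Skorohod problem on a convex
domain, in terms of `M = max_{0 ≤ t ≤ T} |ξ(t) − x₀|`. -/
theorem stmt7 {d : ℕ} (D : Set (Euc d)) (hDopen : IsOpen D) (hDne : D.Nonempty)
    (hDconv : Convex ℝ D) (x₀ : Euc d) (hx₀ : x₀ ∈ D) (R₀ : ℝ) (hR₀ : 0 < R₀)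
    (hball : Metric.closedBall x₀ R₀ ⊆ D)
    (T q : ℝ) (hT : 0 < T) (hq : 1 ≤ q) (ωc : ℝ → ℝ → ℝ) (hωc : IsControl T ωc)
    (w : ℝ → Euc d) (hw : ContinuousOn w (Icc 0 T)) (hw0 : w 0 ∈ closure D)
    (hwq : ∀ s t, 0 ≤ s → s ≤ t → t ≤ T → ‖w t - w s‖ ≤ ωc s t ^ (1 / q))
    (ξ φ : ℝ → Euc d) (μ : Measure ℝ) (nv : ℝ → Euc d)
    (hsol : IsSkorohodSolution D T w ξ φ μ nv)
    (M : ℝ) (hM : M = ⨆ t : Icc (0:ℝ) T, ‖ξ t.1 - x₀‖) :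
    ∀ s t, 0 ≤ s → s ≤ t → t ≤ T →
      totalVar φ s t ≤
        10 * ((16 * R₀⁻¹ * Real.sqrt (1 + 4 * R₀⁻¹ ^ 2 * M ^ 2) + 1) ^ q * ωc s t + 1) *
          (1 + 4 * R₀⁻¹ ^ 2 * M ^ 2) * supOsc w s t :=
  stmt7_general D hDconv x₀ R₀ hR₀ hball T q hq ωc hωc w hw hwq ξ φ μ nv hsol M hM

end
end

section
/- Let D be a convex domain in ℝ^d, x₀ ∈ D, R₀ > 0 with cl(B(x₀, R₀)) ⊆ D. Suppose (ξ, φ) solves the Skorohod problem for a continuous path w on D, and let R be any number with R ≥ R₀ and R ≥ max_{0 ≤ t ≤ T} |ξ(t) − x₀|. Then (ξ, φ) also solves the Skorohod problem for w on the convex domain D_R = D ∩ B(x₀, R) (with the inward normal sets computed for D_R). -/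
/-!
Since `D_R ⊆ D`, inward normals of `D` are inward normals of `D_R`, and a point of `cl D_R` on
`∂D` lies on `∂D_R`; so every condition transfers except that `ξ` stays in `cl D_R`. That holds
because for `y ∈ cl D` with `|y − x₀| ≤ R`, convexity puts the open segment from the interior
point `x₀` to `y` inside both `D` and `B(x₀, R)`, and `y` is a limit of points of that segment.
-/

open MeasureTheory ProbabilityTheory Set RealInnerProductSpace

noncomputable section

lemma normalCone_anti {d : ℕ} {D E : Set (Euc d)} (hED : E ⊆ D) (x : Euc d) :
    normalCone D x ⊆ normalCone E x := by
  simp only [normalCone, normalSet, subset_def, mem_iUnion, mem_ofPred_eq]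
  rintro n ⟨r, hr, hn, hempty⟩
  exact ⟨r, hr, hn, subset_empty_iff.mp (hempty ▸ inter_subset_inter_right _ hED)⟩

lemma mem_frontier_of_mem_frontier_of_subset {X : Type*} [TopologicalSpace X] {D E : Set X}
    {x : X} (hED : E ⊆ D) (hx : x ∈ frontier D) (hxE : x ∈ closure E) : x ∈ frontier E :=
  ⟨hxE, fun hint => hx.2 (interior_mono hED hint)⟩

theorem IsSkorohodSolution.of_subset {d : ℕ} {D E : Set (Euc d)} {T : ℝ}
    {w ξ φ : ℝ → Euc d} {μ : Measure ℝ} {nv : ℝ → Euc d}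
    (hsol : IsSkorohodSolution D T w ξ φ μ nv) (hED : E ⊆ D)
    (hξE : ∀ t ∈ Icc 0 T, ξ t ∈ closure E) : IsSkorohodSolution E T w ξ φ μ nv where
  __ := hsol
  mem := hξE
  bdry := by
    refine measure_mono_null (fun s hs => ?_) (measure_union_null hsol.bdry hsol.carrier)
    rw [mem_union, or_iff_not_imp_right, notMem_compl_iff]
    exact fun ht hfr => hs (mem_frontier_of_mem_frontier_of_subset hED hfr (hξE s ht))
  normal := hsol.normal.mono fun _ hs => normalCone_anti hED _ hs

theorem Convex.mem_closure_inter_ball {E : Type*} [NormedAddCommGroup E] [NormedSpace ℝ E]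
    {D : Set E} (hD : Convex ℝ D) {x₀ y : E} {R : ℝ} (hx₀ : x₀ ∈ interior D) (hR : 0 < R)
    (hy : y ∈ closure D) (hyR : y ∈ Metric.closedBall x₀ R) :
    y ∈ closure (D ∩ Metric.ball x₀ R) := by
  have hD_seg : openSegment ℝ x₀ y ⊆ D :=
    (hD.openSegment_interior_closure_subset_interior hx₀ hy).trans interior_subset
  have hball_seg : openSegment ℝ x₀ y ⊆ Metric.ball x₀ R := by
    rw [← interior_closedBall x₀ hR.ne']
    exact (convex_closedBall x₀ R).openSegment_interior_closure_subset_interior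
      (Metric.ball_subset_interior_closedBall (Metric.mem_ball_self hR)) (subset_closure hyR)
  exact closure_mono (subset_inter hD_seg hball_seg)
    (segment_subset_closure_openSegment (right_mem_segment ℝ x₀ y))

lemma IsCompact.forall_le_of_iSup_le {X : Type*} [TopologicalSpace X] {K : Set X}
    (hK : IsCompact K) {f : X → ℝ} (hf : ContinuousOn f K) {R : ℝ} (h : ⨆ x : K, f x ≤ R) :
    ∀ x ∈ K, f x ≤ R := by
  have hbdd : BddAbove (range fun x : K => f x) := by
    rw [← image_eq_range]
    exact hK.bddAbove_image hf
  exact fun x hx => (le_ciSup hbdd ⟨x, hx⟩).trans h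

theorem stmt8_general {d : ℕ} (D : Set (Euc d)) (hDopen : IsOpen D)
    (hDconv : Convex ℝ D) (x₀ : Euc d) (hx₀ : x₀ ∈ D) (R₀ : ℝ) (hR₀ : 0 < R₀)
    (T : ℝ) (w : ℝ → Euc d)
    (ξ φ : ℝ → Euc d) (μ : Measure ℝ) (nv : ℝ → Euc d)
    (hsol : IsSkorohodSolution D T w ξ φ μ nv)
    (R : ℝ) (hR : R₀ ≤ R) (hRM : (⨆ t : Icc (0:ℝ) T, ‖ξ t.1 - x₀‖) ≤ R) :
    IsSkorohodSolution (D ∩ Metric.ball x₀ R) T w ξ φ μ nv := by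
  have hRpos : 0 < R := hR₀.trans_le hR
  have hx₀_int : x₀ ∈ interior D := hDopen.interior_eq.symm ▸ hx₀
  have hξ_near : ∀ t ∈ Icc 0 T, ‖ξ t - x₀‖ ≤ R :=
    isCompact_Icc.forall_le_of_iSup_le (hsol.cont_ξ.sub continuousOn_const).norm hRM
  refine hsol.of_subset inter_subset_left fun t ht => ?_
  exact hDconv.mem_closure_inter_ball hx₀_int hRpos (hsol.mem t ht)
    (mem_closedBall_iff_norm.2 (hξ_near t ht))

/-- a solution of the Skorohod problem on a convex domain `D` is also a
solution of the Skorohod problem on `D_R = D ∩ B(x₀, R)` whenever `R ≥ R₀` and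
`R ≥ max_{0 ≤ t ≤ T} |ξ(t) − x₀|` (with the normal sets computed for `D_R`). -/
theorem stmt8 {d : ℕ} (D : Set (Euc d)) (hDopen : IsOpen D) (hDne : D.Nonempty)
    (hDconv : Convex ℝ D) (x₀ : Euc d) (hx₀ : x₀ ∈ D) (R₀ : ℝ) (hR₀ : 0 < R₀)
    (hball : Metric.closedBall x₀ R₀ ⊆ D)
    (T : ℝ) (hT : 0 < T) (w : ℝ → Euc d) (hw : ContinuousOn w (Icc 0 T))
    (hw0 : w 0 ∈ closure D)
    (ξ φ : ℝ → Euc d) (μ : Measure ℝ) (nv : ℝ → Euc d)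
    (hsol : IsSkorohodSolution D T w ξ φ μ nv)
    (R : ℝ) (hR : R₀ ≤ R) (hRM : (⨆ t : Icc (0:ℝ) T, ‖ξ t.1 - x₀‖) ≤ R) :
    IsSkorohodSolution (D ∩ Metric.ball x₀ R) T w ξ φ μ nv :=
  stmt8_general D hDopen hDconv x₀ hx₀ R₀ hR₀ T w ξ φ μ nv hsol R hR hRM

end
end

section
/- Let D be a convex domain in ℝ^d and let (ξ₁, φ₁) and (ξ₂, φ₂) solve the Skorohod problems for continuous paths w₁ and w₂ on D, with representing measures μ₁, μ₂ and direction functions n₁, n₂. Then for all 0 ≤ s ≤ t ≤ T: ∫_{(s,t]} ⟨ξ₁(u) − ξ₂(u), n₁(u)⟩ μ₁(du) − ∫_{(s,t]} ⟨ξ₁(u) − ξ₂(u), n₂(u)⟩ μ₂(du) ≤ 0. -/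
open MeasureTheory ProbabilityTheory Set RealInnerProductSpace

noncomputable section

/-! If `n ∈ N_{x,r}`, the ball `B(x - r n, r)` misses `D`, hence its closure, so `x ∈ cl D` is a
point of `cl D` nearest to `x - r n`. As `cl D` is convex, the variational inequality for nearest
points gives `⟪y - x, n⟫ ≥ 0` for every `y ∈ cl D`. Taking `x = ξ₁ u`, `y = ξ₂ u` shows that the
first integrand is `≤ 0` `μ₁`-a.e., and symmetrically the second is `≥ 0` `μ₂`-a.e. -/

theorem real_inner_nonneg_of_disjoint_ball {F : Type*} [NormedAddCommGroup F]
    [InnerProductSpace ℝ F] {C : Set F} (hC : Convex ℝ C) {x v : F} (hx : x ∈ C)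
    (hball : Disjoint (Metric.ball (x - v) ‖v‖) C) {y : F} (hy : y ∈ C) : 0 ≤ ⟪y - x, v⟫ := by
  have : Nonempty C := ⟨⟨x, hx⟩⟩
  have hnearest : ‖x - v - x‖ = ⨅ z : C, ‖x - v - z‖ := by
    refine le_antisymm (le_ciInf fun z => ?_) (ciInf_le ⟨0, ?_⟩ (⟨x, hx⟩ : C))
    · have hz : (z : F) ∉ Metric.ball (x - v) ‖v‖ := hball.notMem_of_mem_right z.2
      rw [Metric.mem_ball, dist_comm, dist_eq_norm, not_lt] at hz
      rwa [sub_sub_cancel_left, norm_neg]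
    · rintro _ ⟨z, rfl⟩
      exact norm_nonneg _
  have hinner := (norm_eq_iInf_iff_real_inner_le_zero hC hx).1 hnearest y hy
  rw [sub_sub_cancel_left, inner_neg_left, real_inner_comm] at hinner
  linarith

theorem real_inner_nonneg_of_mem_normalCone {d : ℕ} {D : Set (Euc d)} (hD : Convex ℝ D)
    {x n : Euc d} (hx : x ∈ closure D) (hn : n ∈ normalCone D x) {y : Euc d}
    (hy : y ∈ closure D) : 0 ≤ ⟪y - x, n⟫ := by
  obtain ⟨hnorm, r, hr, hball⟩ : ‖n‖ = 1 ∧ ∃ r > 0, Metric.ball (x - r • n) r ∩ D = ∅ := by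
    simpa [normalCone, normalSet] using hn
  have hrn : ‖r • n‖ = r := by rw [norm_smul, hnorm, mul_one, Real.norm_of_nonneg hr.le]
  have hdisj : Disjoint (Metric.ball (x - r • n) ‖r • n‖) (closure D) := by
    rw [hrn]
    exact (disjoint_iff_inter_eq_empty.2 hball).closure_right Metric.isOpen_ball
  have hinner := real_inner_nonneg_of_disjoint_ball hD.closure hx hdisj hy
  rw [real_inner_smul_right] at hinner
  exact (mul_nonneg_iff_of_pos_left hr).1 hinner

theorem IsSkorohodSolution.ae_real_inner_nonneg {d : ℕ} {D : Set (Euc d)} {T : ℝ}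
    {w ξ φ : ℝ → Euc d} {μ : Measure ℝ} {nv : ℝ → Euc d} (hD : Convex ℝ D)
    (hsol : IsSkorohodSolution D T w ξ φ μ nv) {η : ℝ → Euc d}
    (hη : ∀ u ∈ Icc 0 T, η u ∈ closure D) : ∀ᵐ u ∂μ, 0 ≤ ⟪η u - ξ u, nv u⟫ := by
  have hIcc : ∀ᵐ u ∂μ, u ∈ Icc 0 T :=
    (measure_eq_zero_iff_ae_notMem.1 hsol.carrier).mono fun _ => not_not.1
  filter_upwards [hIcc, hsol.normal] with u hu hn
  exact real_inner_nonneg_of_mem_normalCone hD (hsol.mem u hu) hn (hη u hu)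

theorem stmt11_general {d : ℕ} (D : Set (Euc d)) (hDconv : Convex ℝ D) (T : ℝ) (w₁ w₂ : ℝ → Euc d)
    (ξ₁ φ₁ ξ₂ φ₂ : ℝ → Euc d) (μ₁ μ₂ : Measure ℝ) (nv₁ nv₂ : ℝ → Euc d)
    (hsol₁ : IsSkorohodSolution D T w₁ ξ₁ φ₁ μ₁ nv₁)
    (hsol₂ : IsSkorohodSolution D T w₂ ξ₂ φ₂ μ₂ nv₂) :
    ∀ s t : ℝ, 0 ≤ s → s ≤ t → t ≤ T →
      (∫ u in Ioc s t, ⟪ξ₁ u - ξ₂ u, nv₁ u⟫ ∂μ₁) -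
          (∫ u in Ioc s t, ⟪ξ₁ u - ξ₂ u, nv₂ u⟫ ∂μ₂) ≤ 0 := by
  intro s t _ _ _
  have h₁ : ∫ u in Ioc s t, ⟪ξ₁ u - ξ₂ u, nv₁ u⟫ ∂μ₁ ≤ 0 := by
    refine integral_nonpos_of_ae (ae_restrict_of_ae ?_)
    filter_upwards [hsol₁.ae_real_inner_nonneg hDconv hsol₂.mem] with u hu
    rw [← neg_sub, inner_neg_left]
    exact neg_nonpos.2 hu
  have h₂ : 0 ≤ ∫ u in Ioc s t, ⟪ξ₁ u - ξ₂ u, nv₂ u⟫ ∂μ₂ :=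
    integral_nonneg_of_ae (ae_restrict_of_ae (hsol₂.ae_real_inner_nonneg hDconv hsol₁.mem))
  linarith

/-- for two Skorohod solutions on a convex domain,
`∫_{(s,t]} ⟨ξ₁ − ξ₂, n₁⟩ dμ₁ − ∫_{(s,t]} ⟨ξ₁ − ξ₂, n₂⟩ dμ₂ ≤ 0`. -/
theorem stmt11 {d : ℕ} (D : Set (Euc d)) (hDopen : IsOpen D) (hDne : D.Nonempty)
    (hDconv : Convex ℝ D) (T : ℝ) (hT : 0 < T)
    (w₁ w₂ : ℝ → Euc d) (hw₁ : ContinuousOn w₁ (Icc 0 T)) (hw₂ : ContinuousOn w₂ (Icc 0 T))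
    (hw₁0 : w₁ 0 ∈ closure D) (hw₂0 : w₂ 0 ∈ closure D)
    (ξ₁ φ₁ ξ₂ φ₂ : ℝ → Euc d) (μ₁ μ₂ : Measure ℝ) (nv₁ nv₂ : ℝ → Euc d)
    (hsol₁ : IsSkorohodSolution D T w₁ ξ₁ φ₁ μ₁ nv₁)
    (hsol₂ : IsSkorohodSolution D T w₂ ξ₂ φ₂ μ₂ nv₂) :
    ∀ s t : ℝ, 0 ≤ s → s ≤ t → t ≤ T →
      (∫ u in Ioc s t, ⟪ξ₁ u - ξ₂ u, nv₁ u⟫ ∂μ₁) -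
          (∫ u in Ioc s t, ⟪ξ₁ u - ξ₂ u, nv₂ u⟫ ∂μ₂) ≤ 0 :=
  stmt11_general D hDconv T w₁ w₂ ξ₁ φ₁ ξ₂ φ₂ μ₁ μ₂ nv₁ nv₂ hsol₁ hsol₂
end
end
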